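/- For every natural number N ≥ 1, the asymptotic performance of the FIFO buffer is 2: the sequence rp_FIFO(n)/n converges to 2 as n → ∞. -/

import Mathlib

open scoped ENNReal

/-- Labels of steps in the FIFO transition system. -/
inductive FLabel : Type
  | tick | ins | outs
deriving DecidableEq

/-- States of the FIFO transition system: a fill level `i ∈ {0, …, N+2}` together
with an urgency flag (`true` = urgent, `false` = relaxed). -/
abbrev FState : Type := ℕ × Bool

/-- Steps of the FIFO transition system (for the buffer of capacity `N + 2`). -/
inductive FStep (N : ℕ) : FState → FLabel → FState → Prop
  | tick (i : ℕ) : FStep N (i, false) FLabel.tick (i, true)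
  | ins (i : ℕ) (u : Bool) (h : i < N + 2) : FStep N (i, u) FLabel.ins (i + 1, false)
  | outs (i : ℕ) (u : Bool) (h : 0 < i) : FStep N (i, u) FLabel.outs (i - 1, false)

/-- `FPath N s ls` : `ls` is the sequence of labels of a finite path of consecutive
steps starting in state `s`. -/
inductive FPath (N : ℕ) : FState → List FLabel → Prop
  | nil (s : FState) : FPath N s []
  | cons {s s' : FState} {l : FLabel} {ls : List FLabel} :
      FStep N s l s' → FPath N s' ls → FPath N s (l :: ls)

/-- A path of the FIFO system: a path starting in the initial state `(0, relaxed)`. -/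
def FifoPath (N : ℕ) (ls : List FLabel) : Prop := FPath N (0, false) ls

/-- An `n`-admissible path of the FIFO system: at most `n` `in`-steps and
at most `n - 1` `out`-steps. -/
def FifoAdmissible (N n : ℕ) (ls : List FLabel) : Prop :=
  FifoPath N ls ∧ ls.count FLabel.ins ≤ n ∧ ls.count FLabel.outs ≤ n - 1

/-- The response performance of the FIFO buffer: the supremum (in `ℕ∞`) of the
number of ticks over all `n`-admissible paths. -/
noncomputable def rpFifo (N n : ℕ) : ℕ∞ :=
  sSup {k : ℕ∞ | ∃ ls : List FLabel, FifoAdmissible N n ls ∧ (ls.count FLabel.tick : ℕ∞) = k}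

/-!
A tick leads to an urgent state, which only an `in`- or `out`-step leaves, so a path from a
relaxed state has at most `#in + #out + 1` ticks, i.e. at most `2n` when it is `n`-admissible.
The path `(tick in tick out)^(n-1) tick in tick`, which stays at the fill levels `0` and `1`
and so exists for every capacity, attains this bound. Hence `rp_FIFO(n) = 2n` for `n ≥ 1`.
-/

theorem FPath.count_tick_le {N : ℕ} {s : FState} {ls : List FLabel} (h : FPath N s ls) :
    ls.count .tick ≤ ls.count .ins + ls.count .outs + if s.2 then 0 else 1 := by
  induction h with
  | nil => simp
  | cons step _ ih =>
    cases step <;>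
      simp only [List.count_cons_self, List.count_cons_of_ne, ne_eq, reduceCtorEq,
        not_false_eq_true, Bool.false_eq_true, ↓reduceIte] at ih ⊢ <;> omega

theorem FifoAdmissible.count_tick_le {N n : ℕ} {ls : List FLabel} (hn : n ≠ 0)
    (h : FifoAdmissible N n ls) : ls.count .tick ≤ 2 * n := by
  obtain ⟨hpath, hins, houts⟩ := h
  have := hpath.count_tick_le
  simp only [Bool.false_eq_true, if_false] at this
  omega

def tickCycles : ℕ → List FLabel
  | 0 => [.tick, .ins, .tick]
  | k + 1 => .tick :: .ins :: .tick :: .outs :: tickCycles k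

theorem fifoPath_tickCycles (N k : ℕ) : FifoPath N (tickCycles k) := by
  induction k with
  | zero => exact .cons (.tick 0) (.cons (.ins 0 true (by omega)) (.cons (.tick 1) (.nil _)))
  | succ k ih =>
    exact .cons (.tick 0) (.cons (.ins 0 true (by omega))
      (.cons (.tick 1) (.cons (.outs 1 true (by omega)) ih)))

theorem count_tickCycles (k : ℕ) :
    (tickCycles k).count .tick = 2 * (k + 1) ∧ (tickCycles k).count .ins = k + 1 ∧
      (tickCycles k).count .outs = k := by
  induction k with
  | zero => simp [tickCycles]
  | succ k ih => simp [tickCycles, ih, mul_add]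

theorem fifoAdmissible_tickCycles (N k : ℕ) : FifoAdmissible N (k + 1) (tickCycles k) := by
  obtain ⟨-, hins, houts⟩ := count_tickCycles k
  exact ⟨fifoPath_tickCycles N k, hins.le, by omega⟩

theorem rpFifo_succ (N k : ℕ) : rpFifo N (k + 1) = (2 * (k + 1) : ℕ) := by
  apply le_antisymm
  · refine sSup_le ?_
    rintro _ ⟨ls, hls, rfl⟩
    exact_mod_cast hls.count_tick_le k.succ_ne_zero
  · exact le_sSup ⟨tickCycles k, fifoAdmissible_tickCycles N k, by rw [(count_tickCycles k).1]⟩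

theorem fifo_asymptotic_performance_general (N : ℕ) :
    Filter.Tendsto (fun n : ℕ => ((rpFifo N n : ℝ≥0∞) / (n : ℝ≥0∞)))
      Filter.atTop (nhds 2) := by
  refine tendsto_const_nhds.congr' ?_
  filter_upwards [Filter.eventually_ne_atTop 0] with n hn
  obtain ⟨k, rfl⟩ := Nat.exists_eq_succ_of_ne_zero hn
  rw [rpFifo_succ]
  push_cast
  exact (ENNReal.mul_div_cancel_right (by positivity) (by simp)).symm

/-- For every `N ≥ 1`, the asymptotic performance of the FIFO buffer is `2`:
the sequence `rp_FIFO(n) / n` converges to `2` as `n → ∞`. -/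
theorem fifo_asymptotic_performance (N : ℕ) (hN : 1 ≤ N) :
    Filter.Tendsto (fun n : ℕ => ((rpFifo N n : ℝ≥0∞) / (n : ℝ≥0∞)))
      Filter.atTop (nhds 2) :=
  fifo_asymptotic_performance_general N
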